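/- arXiv:2206.11688 — 5 statements merged into one kernel-verified Lean document; each statement's English description precedes it below -/
import Mathlib

section
/- Let A be a commutative ring, (a_1,...,a_{n+1}) a unimodular row with splitting (b_1,...,b_{n+1}) (i.e. Σ a_i b_i = 1). Set s = a_1 b_1 + ... + a_n b_n and I = ⟨a_1,...,a_n⟩. Then I = ⟨a_1,...,a_{n-1}, a_n a_{n+1}, s⟩. -/
/-- Lemma (`genidealgenbyunimod`, first part): if `(a₁, …, a_{n+1})` is a unimodular row with
splitting `(b₁, …, b_{n+1})` and `s = a₁b₁ + ⋯ + aₙbₙ`, then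
`⟨a₁, …, aₙ⟩ = ⟨a₁, …, a_{n-1}, aₙa_{n+1}, s⟩`. (Indices are 0-based below.) -/
theorem ideal_eq_span_with_product_and_s {A : Type*} [CommRing A] (n : ℕ) (hn : 1 ≤ n)
    (a b : Fin (n + 1) → A) (hsplit : ∑ i, a i * b i = 1)
    (s : A) (hs : s = ∑ i : Fin n, a i.castSucc * b i.castSucc) :
    Ideal.span (Set.range fun i : Fin n => a i.castSucc) =
      Ideal.span ((Set.range fun i : Fin (n - 1) => a (Fin.castLE (by omega) i)) ∪
        {a ⟨n - 1, by omega⟩ * a ⟨n, by omega⟩, s}) := by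
  have hsum : s + a (Fin.last n) * b (Fin.last n) = 1 := by
    rw [hs, ← Fin.sum_univ_castSucc (f := fun i => a i * b i), hsplit]
  have hlastmem : a (Fin.last n) = a ⟨n, by omega⟩ := rfl
  apply le_antisymm
  · rw [Ideal.span_le]
    rintro x ⟨i, rfl⟩
    by_cases hi : (i : ℕ) < n - 1
    · exact Ideal.subset_span (Set.mem_union_left _ ⟨⟨i, hi⟩, by
        apply congrArg; apply Fin.ext; simp⟩)
    · have hieq : (i.castSucc : Fin (n+1)) = ⟨n - 1, by omega⟩ := by
        ext; simp; omega
      show a i.castSucc ∈ _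
      rw [hieq]
      have h1 : a ⟨n - 1, by omega⟩ =
          a ⟨n - 1, by omega⟩ * s +
            (a ⟨n - 1, by omega⟩ * a ⟨n, by omega⟩) * b (Fin.last n) := by
        rw [← hlastmem, mul_assoc, ← mul_add, hsum, mul_one]
      have h2 : a ⟨n - 1, by omega⟩ * s +
          a ⟨n - 1, by omega⟩ * a ⟨n, by omega⟩ * b (Fin.last n) ∈
          Ideal.span ((Set.range fun i : Fin (n - 1) => a (Fin.castLE (by omega) i)) ∪
            {a ⟨n - 1, by omega⟩ * a ⟨n, by omega⟩, s}) := by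
        refine add_mem (Ideal.mul_mem_left _ _ (Ideal.subset_span ?_))
          (Ideal.mul_mem_right _ _ (Ideal.subset_span ?_))
        · exact Set.mem_union_right _ (by simp)
        · exact Set.mem_union_right _ (by simp)
      rwa [← h1] at h2
  · rw [Ideal.span_le]
    rintro x (⟨i, rfl⟩ | hx)
    · apply Ideal.subset_span
      exact ⟨⟨i, by omega⟩, by apply congrArg; apply Fin.ext; simp [Fin.castLE]⟩
    · rcases hx with rfl | rfl
      · apply Ideal.mul_mem_right
        apply Ideal.subset_span
        exact ⟨⟨n - 1, by omega⟩, by apply congrArg; apply Fin.ext; simp⟩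
      · rw [hs]
        refine Ideal.sum_mem _ fun i _ => Ideal.mul_mem_right _ _ ?_
        exact Ideal.subset_span ⟨i, rfl⟩
end

section
/- Let A be a commutative ring, I = ⟨a_1,...,a_n⟩ an ideal generated by a unimodular row's first n entries, where (a_1,...,a_{n+1}) is unimodular. Then the map of A/I-modules (A/I)^n → I/I² induced by the classes of (a_1,...,a_{n-1}, a_n a_{n+1}) is surjective. -/
/-!
The classes of the generators `a₁, …, aₙ` of `I` span `I/I²` over `A/I`. Unimodularity of the
row makes `a_{n+1}` a unit modulo `I`, say `u · a_{n+1} ≡ 1`, so the class of `aₙ` equals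
`u` times the class of `aₙ a_{n+1}` in `I/I²`; hence replacing `aₙ` by `aₙ a_{n+1}` loses nothing.
-/

theorem Fin.range_eq_insert_last {α : Type*} {n : ℕ} (f : Fin (n + 1) → α) :
    Set.range f = insert (f (Fin.last n)) (Set.range fun i : Fin n => f i.castSucc) := by
  conv_lhs => rw [← Fin.snoc_init_self f]
  rw [Fin.range_snoc]
  rfl

namespace Ideal

variable {A : Type*} [CommRing A]

theorem exists_mul_sub_one_mem_of_span_singleton_sup_eq_top {I : Ideal A} {b : A}
    (h : span {b} ⊔ I = ⊤) : ∃ u, u * b - 1 ∈ I := by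
  obtain ⟨u, i, hi, hui⟩ := mem_span_singleton_sup.mp (h ▸ Submodule.mem_top : (1 : A) ∈ _)
  refine ⟨u, ?_⟩
  rw [← hui, sub_add_cancel_left]
  exact neg_mem hi

theorem span_toCotangent_coe_preimage_eq_top (s : Set A) :
    Submodule.span (A ⧸ span s) ((span s).toCotangent '' (Subtype.val ⁻¹' s)) = ⊤ := by
  rw [← Submodule.restrictScalars_inj A,
    Submodule.restrictScalars_span A _ Quotient.mk_surjective, ← Submodule.map_span,
    Submodule.span_span_coe_preimage, Submodule.map_top, toCotangent_range,
    Submodule.restrictScalars_top]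

theorem toCotangent_eq_mk_smul_toCotangent {I : Ideal A} {x y : I} {c u : A}
    (hy : (y : A) = x * c) (hu : u * c - 1 ∈ I) :
    I.toCotangent x = Quotient.mk I u • I.toCotangent y := by
  rw [← Quotient.algebraMap_eq, algebraMap_smul, ← map_smul, toCotangent_eq,
    Submodule.coe_smul, hy, smul_eq_mul,
    show (x : A) - u * (x * c) = -((u * c - 1) * x) by ring, pow_two]
  exact neg_mem (mul_mem_mul hu x.2)

end Ideal

theorem cotangent_generated_by_twisted_row_general {A : Type*} [CommRing A] (n : ℕ)
    (a : Fin (n + 1) → A) (ha : Ideal.span (Set.range a) = ⊤)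
    (I : Ideal A) (hI : I = Ideal.span (Set.range fun i : Fin n => a i.castSucc))
    (g : Fin n → A)
    (hg₁ : ∀ i : Fin n, (i : ℕ) < n - 1 → g i = a i.castSucc)
    (hg₂ : ∀ i : Fin n, (i : ℕ) = n - 1 → g i = a i.castSucc * a (Fin.last n))
    (hgI : ∀ i : Fin n, g i ∈ I) :
    Submodule.span (A ⧸ I) (Set.range fun i : Fin n => I.toCotangent ⟨g i, hgI i⟩) = ⊤ := by
  rw [Fin.range_eq_insert_last, Ideal.span_insert, ← hI] at ha
  obtain ⟨u, hu⟩ := Ideal.exists_mul_sub_one_mem_of_span_singleton_sup_eq_top ha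
  subst hI
  rw [eq_top_iff, ← Ideal.span_toCotangent_coe_preimage_eq_top, Submodule.span_le]
  rintro _ ⟨⟨_, _⟩, ⟨i, rfl⟩, rfl⟩
  rcases (Nat.le_sub_one_of_lt i.isLt).lt_or_eq with hi | hi
  · convert Submodule.subset_span (Set.mem_range_self i) using 3
    exact (hg₁ i hi).symm
  · rw [Ideal.toCotangent_eq_mk_smul_toCotangent (y := ⟨g i, hgI i⟩) (hg₂ i hi) hu]
    exact Submodule.smul_mem _ _ (Submodule.subset_span ⟨i, rfl⟩)

/-- Lemma (`genidealgenbyunimod`, middle part): if `(a₁, …, a_{n+1})` is a unimodular row and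
`I = ⟨a₁, …, aₙ⟩`, then the map `(A/I)ⁿ → I/I²` induced by the classes of
`(a₁, …, a_{n-1}, aₙ·a_{n+1})` is surjective; equivalently, these classes generate the
`A/I`-module `I/I²`. (Indices are 0-based below: `g` is the generating family.) -/
theorem cotangent_generated_by_twisted_row {A : Type*} [CommRing A] (n : ℕ) (hn : 1 ≤ n)
    (a : Fin (n + 1) → A) (ha : Ideal.span (Set.range a) = ⊤)
    (I : Ideal A) (hI : I = Ideal.span (Set.range fun i : Fin n => a i.castSucc))
    (g : Fin n → A)
    (hg₁ : ∀ i : Fin n, (i : ℕ) < n - 1 → g i = a i.castSucc)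
    (hg₂ : ∀ i : Fin n, (i : ℕ) = n - 1 → g i = a i.castSucc * a (Fin.last n))
    (hgI : ∀ i : Fin n, g i ∈ I) :
    Submodule.span (A ⧸ I) (Set.range fun i : Fin n => I.toCotangent ⟨g i, hgI i⟩) = ⊤ :=
  cotangent_generated_by_twisted_row_general n a ha I hI g hg₁ hg₂ hgI
end

section
/- Let R be a local commutative ring, I an ideal of R generated by a regular sequence (a_1,...,a_n), and M an R-module such that (a_1,...,a_n) is also an M-regular sequence. Then Tor_i^R(R/I, M) = 0 for all i > 0. -/
open CategoryTheory

/-!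
Fix a projective resolution `P → M`. Then `Tor_i(N, M)` is the homology of `N ⊗ P`, and since
every `P_n` is flat, a short exact sequence `0 → N₁ → N₂ → N₃ → 0` yields a short exact sequence
of complexes `0 → N₁ ⊗ P → N₂ ⊗ P → N₃ ⊗ P → 0`. If `Tor_{>0}(N₁, M) = Tor_{>0}(N₂, M) = 0` and
`N₁ ⊗ M → N₂ ⊗ M` is injective, its long exact homology sequence gives `Tor_{>0}(N₃, M) = 0`.
Applied to `0 → N → N → N/aN → 0` with `a` regular on `N` and on `N ⊗ M`, this shows that
`Tor`-independence of `N` and `M` passes to `N/aN`, and `(N/aN) ⊗ M ≅ (N ⊗ M)/a(N ⊗ M)`.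
Starting from `N = R` and quotienting by `a₁, …, aₙ` in turn gives the theorem.
-/

universe u

open MonoidalCategory Limits HomologicalComplex RingTheory.Sequence

namespace ModuleCat

variable {R : Type u} [CommRing R]

noncomputable abbrev tensorComplex (K : ChainComplex (ModuleCat.{u} R) ℕ) :
    ModuleCat.{u} R ⥤ ChainComplex (ModuleCat.{u} R) ℕ where
  obj N := ((tensorLeft N).mapHomologicalComplex _).obj K
  map f := (NatTrans.mapHomologicalComplex ((tensoringLeft _).map f) _).app K

instance (K : ChainComplex (ModuleCat.{u} R) ℕ) : (tensorComplex K).PreservesZeroMorphisms where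
  map_zero _ _ := by ext : 2; simp; rfl

lemma shortExact_map_tensorComplex {K : ChainComplex (ModuleCat.{u} R) ℕ}
    (hK : ∀ n, Module.Flat R (K.X n)) {S : ShortComplex (ModuleCat.{u} R)} (hS : S.ShortExact) :
    (S.map (tensorComplex K)).ShortExact := by
  rw [shortExact_iff_degreewise_shortExact]
  intro n
  have := hK n
  exact hS.map_of_exact (tensorRight (K.X n))

variable {M : ModuleCat.{u} R}

noncomputable def tensorComplexHomologyZeroIso (P : ProjectiveResolution M)
    (N : ModuleCat.{u} R) : ((tensorComplex P.complex).obj N).homology 0 ≅ N ⊗ M :=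
  ChainComplex.isoHomologyι₀ _ ≪≫ asIso (P.fromLeftDerivedZero' (tensorLeft N))

lemma tensorComplexHomologyZeroIso_hom_naturality (P : ProjectiveResolution M)
    {N N' : ModuleCat.{u} R} (f : N ⟶ N') :
    homologyMap ((tensorComplex P.complex).map f) 0 ≫ (tensorComplexHomologyZeroIso P N').hom =
      (tensorComplexHomologyZeroIso P N).hom ≫ f ▷ M := by
  have hopcycles : opcyclesMap ((tensorComplex P.complex).map f) 0 ≫
      P.fromLeftDerivedZero' (tensorLeft N') = P.fromLeftDerivedZero' (tensorLeft N) ≫ f ▷ M := by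
    rw [← cancel_epi (pOpcycles _ 0), p_opcyclesMap_assoc,
      ProjectiveResolution.pOpcycles_comp_fromLeftDerivedZero',
      ProjectiveResolution.pOpcycles_comp_fromLeftDerivedZero'_assoc]
    exact (whisker_exchange f (P.π.f 0)).symm
  dsimp only [tensorComplexHomologyZeroIso, Iso.trans_hom, asIso_hom]
  rw [isoHomologyι_hom, isoHomologyι_hom, homologyι_naturality_assoc, hopcycles]
  rfl

lemma mono_homologyMap_zero_tensorComplex (P : ProjectiveResolution M) {N N' : ModuleCat.{u} R}
    (f : N ⟶ N') [Mono (f ▷ M)] : Mono (homologyMap ((tensorComplex P.complex).map f) 0) := by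
  rw [(Iso.eq_comp_inv _).2 (tensorComplexHomologyZeroIso_hom_naturality P f)]
  infer_instance

lemma isZero_homology_tensorComplex_of_shortExact (P : ProjectiveResolution M)
    {S : ShortComplex (ModuleCat.{u} R)} (hS : S.ShortExact) [Mono (S.f ▷ M)]
    (h₁ : ∀ i, 0 < i → IsZero (((tensorComplex P.complex).obj S.X₁).homology i))
    (h₂ : ∀ i, 0 < i → IsZero (((tensorComplex P.complex).obj S.X₂).homology i))
    (i : ℕ) (hi : 0 < i) : IsZero (((tensorComplex P.complex).obj S.X₃).homology i) := by
  have hSE := shortExact_map_tensorComplex (K := P.complex) (fun _ ↦ inferInstance) hS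
  obtain ⟨i, rfl⟩ := Nat.exists_eq_add_one_of_ne_zero hi.ne'
  have rel : (ComplexShape.down ℕ).Rel (i + 1) i := rfl
  have hδ_zero : hSE.δ (i + 1) i rel = 0 := by
    cases i with
    | zero =>
      -- `δ` is followed by `H₀(S.X₁ ⊗ P) ≅ S.X₁ ⊗ M ⟶ S.X₂ ⊗ M`, which is injective
      have : Mono (homologyMap (S.map (tensorComplex P.complex)).f 0) :=
        mono_homologyMap_zero_tensorComplex P S.f
      exact zero_of_comp_mono _ (hSE.δ_comp 1 0 rel)
    | succ j => exact (h₁ (j + 1) j.succ_pos).eq_of_tgt _ _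
  exact (hSE.homology_exact₃ (i + 1) i rel).isZero_X₂ ((h₂ (i + 1) hi).eq_of_src _ _) hδ_zero

lemma isZero_Tor_of_shortExact {S : ShortComplex (ModuleCat.{u} R)} (hS : S.ShortExact)
    (M : ModuleCat.{u} R) [Mono (S.f ▷ M)]
    (h₁ : ∀ i, 0 < i → IsZero (((Tor _ i).obj S.X₁).obj M))
    (h₂ : ∀ i, 0 < i → IsZero (((Tor _ i).obj S.X₂).obj M))
    (i : ℕ) (hi : 0 < i) : IsZero (((Tor _ i).obj S.X₃).obj M) := by
  let P := CategoryTheory.projectiveResolution M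
  have e (N : ModuleCat.{u} R) (i : ℕ) :
      ((Tor _ i).obj N).obj M ≅ ((tensorComplex P.complex).obj N).homology i :=
    P.isoLeftDerivedObj (tensorLeft N) i
  exact (isZero_homology_tensorComplex_of_shortExact P hS
    (fun i hi ↦ (h₁ i hi).of_iso (e _ i).symm) (fun i hi ↦ (h₂ i hi).of_iso (e _ i).symm)
    i hi).of_iso (e _ i)

lemma isZero_Tor_tensorUnit (M : ModuleCat.{u} R) (i : ℕ) (hi : 0 < i) :
    IsZero (((Tor _ i).obj (𝟙_ (ModuleCat.{u} R))).obj M) := by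
  obtain ⟨n, rfl⟩ := Nat.exists_eq_add_one_of_ne_zero hi.ne'
  let P := CategoryTheory.projectiveResolution M
  have e : ((tensorLeft (𝟙_ _)).mapHomologicalComplex _).obj P.complex ≅ P.complex :=
    (NatIso.mapHomologicalComplex (leftUnitorNatIso _) _).app _ ≪≫
      (Functor.mapHomologicalComplexIdIso _ _).app _
  exact ((P.complex_exactAt_succ n).of_iso e.symm).isZero_homology.of_iso
    (P.isoLeftDerivedObj _ (n + 1))

lemma isZero_Tor_quotSMulTop {N : ModuleCat.{u} R} {a : R} (hN : IsSMulRegular N a)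
    (M : ModuleCat.{u} R) (hNM : IsSMulRegular (N ⊗ M : ModuleCat.{u} R) a)
    (h : ∀ i, 0 < i → IsZero (((Tor _ i).obj N).obj M)) (i : ℕ) (hi : 0 < i) :
    IsZero (((Tor _ i).obj (of R (QuotSMulTop a N))).obj M) := by
  have : Mono ((N.smulShortComplex a).f ▷ M) := by
    change Mono ((a • 𝟙 N) ▷ M)
    rw [MonoidalLinear.smul_whiskerRight, id_whiskerRight, mono_iff_injective]
    exact hNM
  exact isZero_Tor_of_shortExact hN.smulShortComplex_shortExact M h h i hi

lemma isZero_Tor_quotient_ofList_smul_top {N : ModuleCat.{u} R} {rs : List R}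
    (hN : IsWeaklyRegular N rs) (M : ModuleCat.{u} R)
    (hNM : IsWeaklyRegular (N ⊗ M : ModuleCat.{u} R) rs)
    (h : ∀ i, 0 < i → IsZero (((Tor _ i).obj N).obj M)) (i : ℕ) (hi : 0 < i) :
    IsZero (((Tor _ i).obj (of R (N ⧸ (Ideal.ofList rs • ⊤ : Submodule R N)))).obj M) := by
  induction rs generalizing N i with
  | nil =>
    exact (h i hi).of_iso
      (((Tor _ i).mapIso (Submodule.quotEquivOfEqBot _ (by simp)).toModuleIso).app M)
  | cons a rs ih =>
    rw [isWeaklyRegular_cons_iff] at hN hNM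
    have hquotM : IsWeaklyRegular (of R (QuotSMulTop a N) ⊗ M : ModuleCat.{u} R) rs :=
      ((QuotSMulTop.quotSMulTopTensorEquivQuotSMulTop a M N).isWeaklyRegular_congr rs).2 hNM.2
    exact (ih hN.2 hquotM (isZero_Tor_quotSMulTop hN.1 M hNM.1 h) i hi).of_iso
      (((Tor _ i).mapIso
        (Submodule.quotOfListConsSMulTopEquivQuotSMulTopInner N a rs).toModuleIso).app M)

end ModuleCat

theorem tor_vanishing_of_regular_sequence_general {R : Type} [CommRing R]
    (rs : List R) (I : Ideal R) (hI : I = Ideal.span {x | x ∈ rs})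
    (hreg : RingTheory.Sequence.IsRegular R rs)
    (M : Type) [AddCommGroup M] [Module R M]
    (hMreg : RingTheory.Sequence.IsRegular M rs) :
    ∀ i : ℕ, 0 < i →
      Limits.IsZero (((Tor (ModuleCat R) i).obj (ModuleCat.of R (R ⧸ I))).obj
        (ModuleCat.of R M)) := by
  intro i hi
  subst hI
  have hunitM : IsWeaklyRegular (𝟙_ (ModuleCat R) ⊗ ModuleCat.of R M : ModuleCat R) rs :=
    ((λ_ (ModuleCat.of R M)).toLinearEquiv.isWeaklyRegular_congr rs).2 hMreg.toIsWeaklyRegular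
  have := ModuleCat.isZero_Tor_quotient_ofList_smul_top (N := 𝟙_ _)
    hreg.toIsWeaklyRegular (ModuleCat.of R M) hunitM (ModuleCat.isZero_Tor_tensorUnit _) i hi
  exact this.of_iso (((Tor _ i).mapIso (Submodule.quotEquivOfEq _ _ (by simp)).toModuleIso).app _)

/-- Lemma (`conditiontorind`): over a local commutative ring `R`, if the ideal `I` is generated
by a regular sequence `(a₁, …, aₙ)` which is also `M`-regular, then `Tor_i^R(R/I, M) = 0` for
all `i > 0`. -/
theorem tor_vanishing_of_regular_sequence {R : Type} [CommRing R] [IsLocalRing R]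
    (rs : List R) (I : Ideal R) (hI : I = Ideal.span {x | x ∈ rs})
    (hreg : RingTheory.Sequence.IsRegular R rs)
    (M : Type) [AddCommGroup M] [Module R M]
    (hMreg : RingTheory.Sequence.IsRegular M rs) :
    ∀ i : ℕ, 0 < i →
      Limits.IsZero (((Tor (ModuleCat R) i).obj (ModuleCat.of R (R ⧸ I))).obj
        (ModuleCat.of R M)) :=
  tor_vanishing_of_regular_sequence_general rs I hI hreg M hMreg
end

section
/- Let R be a commutative ring, λ ∈ R a unit, and (x, y, z) with x, y ∈ R^n, z ∈ R satisfying Σ x_i y_i = z(1-z). Set a(μ) = (1-z) + μz and b = 2 - λ - λ^{-1}. Then a(λ)·a(λ^{-1}) = 1 - b·Σ x_i y_i, so that the pair of rows v = (x_1,...,x_n, a(λ)) and w = (b·y_1,...,b·y_n, a(λ^{-1})) satisfies Σ_{i=1}^{n+1} v_i w_i = 1. In particular v is a unimodular row of length n+1. -/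
/-- Construction of `μₙ : 𝔾ₘ × Q_{2n} → Q_{2n+1}` on `R`-points: for a unit `λ` and
`(x, y, z) ∈ Q_{2n}(R)`, with `a(μ) = (1-z) + μz` and `b = 2 - λ - λ⁻¹`, one has
`a(λ)·a(λ⁻¹) = 1 - b·∑ xᵢyᵢ`, the rows `v = (x, a(λ))` and `w = (b·y, a(λ⁻¹))` satisfy
`∑ vᵢwᵢ = 1`, and in particular `v` is unimodular. -/
theorem mu_construction {R : Type*} [CommRing R] (n : ℕ) (lam : Rˣ)
    (x y : Fin n → R) (z : R) (h : ∑ i, x i * y i = z * (1 - z)) :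
    ((1 - z) + (lam : R) * z) * ((1 - z) + ((lam⁻¹ : Rˣ) : R) * z) =
        1 - (2 - (lam : R) - ((lam⁻¹ : Rˣ) : R)) * ∑ i, x i * y i ∧
      ∑ i : Fin (n + 1),
          (Fin.snoc x ((1 - z) + (lam : R) * z) : Fin (n + 1) → R) i *
            (Fin.snoc (fun j => (2 - (lam : R) - ((lam⁻¹ : Rˣ) : R)) * y j)
              ((1 - z) + ((lam⁻¹ : Rˣ) : R) * z) : Fin (n + 1) → R) i = 1 ∧
      Ideal.span (Set.range (Fin.snoc x ((1 - z) + (lam : R) * z) : Fin (n + 1) → R)) = ⊤ := by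
  have hu : (lam : R) * ((lam⁻¹ : Rˣ) : R) = 1 := by
    rw [← Units.val_mul, mul_inv_cancel, Units.val_one]
  have h1 : ((1 - z) + (lam : R) * z) * ((1 - z) + ((lam⁻¹ : Rˣ) : R) * z) =
      1 - (2 - (lam : R) - ((lam⁻¹ : Rˣ) : R)) * ∑ i, x i * y i := by
    linear_combination z ^ 2 * hu + (2 - (lam : R) - ((lam⁻¹ : Rˣ) : R)) * h
  have h2 : ∑ i : Fin (n + 1),
      (Fin.snoc x ((1 - z) + (lam : R) * z) : Fin (n + 1) → R) i *
        (Fin.snoc (fun j => (2 - (lam : R) - ((lam⁻¹ : Rˣ) : R)) * y j)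
          ((1 - z) + ((lam⁻¹ : Rˣ) : R) * z) : Fin (n + 1) → R) i = 1 := by
    rw [Fin.sum_univ_castSucc]
    simp only [Fin.snoc_castSucc, Fin.snoc_last]
    have : ∑ i : Fin n, x i * ((2 - (lam : R) - ((lam⁻¹ : Rˣ) : R)) * y i) =
        (2 - (lam : R) - ((lam⁻¹ : Rˣ) : R)) * ∑ i, x i * y i := by
      rw [Finset.mul_sum]; exact Finset.sum_congr rfl fun i _ => by ring
    rw [this, h1]; ring
  refine ⟨h1, h2, ?_⟩
  rw [Ideal.eq_top_iff_one]
  have hm := Ideal.sum_mem (Ideal.span (Set.range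
      (Fin.snoc x ((1 - z) + (lam : R) * z) : Fin (n + 1) → R)))
    (fun i (_ : i ∈ Finset.univ) => Ideal.mul_mem_right
      ((Fin.snoc (fun j => (2 - (lam : R) - ((lam⁻¹ : Rˣ) : R)) * y j)
        ((1 - z) + ((lam⁻¹ : Rˣ) : R) * z) : Fin (n + 1) → R) i) _
      (Ideal.subset_span ⟨i, rfl⟩))
  rwa [h2] at hm
end

section
/- Let k be a field, n ≥ 1, and let B = k[Q_{2n+1}] be the coordinate ring of the odd quadric. Then for each 1 ≤ i ≤ n, the element x_i is a non-zerodivisor on B/⟨x_1,...,x_{i-1}⟩; that is, (x_1,...,x_n) is a regular sequence in B. -/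
open MvPolynomial

/-- If `g` sends each variable either to `0` (with `X t ∈ S`) or to itself, then
`p - aeval g p` lies in the ideal spanned by `S`. -/
private lemma sub_aeval_mem {σ : Type*} {R : Type*} [CommRing R]
    (g : σ → MvPolynomial σ R) (S : Set (MvPolynomial σ R))
    (hg : ∀ t, (g t = 0 ∧ X t ∈ S) ∨ g t = X t) (p : MvPolynomial σ R) :
    p - aeval g p ∈ Ideal.span S := by
  induction p using MvPolynomial.induction_on with
  | C a => simp
  | add p q hp hq =>
      have : p + q - aeval g (p + q) = (p - aeval g p) + (q - aeval g q) := by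
        rw [map_add]; ring
      rw [this]; exact Ideal.add_mem _ hp hq
  | mul_X p t hp =>
      rcases hg t with ⟨h0, hS⟩ | h1
      · have : p * X t - aeval g (p * X t) = p * X t := by
          rw [map_mul, aeval_X, h0, mul_zero, sub_zero]
        rw [this]
        exact Ideal.mul_mem_left _ _ (Ideal.subset_span hS)
      · have : p * X t - aeval g (p * X t) = (p - aeval g p) * X t := by
          rw [map_mul, aeval_X, h1]; ring
        rw [this]
        exact Ideal.mul_mem_right _ _ hp
private lemma prime_X' {σ : Type*} {R : Type*} [CommRing R] [IsDomain R] (s : σ) :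
    Prime (X s : MvPolynomial σ R) := by
  classical
  set θ : MvPolynomial σ R →ₐ[R] MvPolynomial σ R :=
    aeval (fun t => if t = s then 0 else X t) with hθdef
  have hθ : ∀ p : MvPolynomial σ R, (X s : MvPolynomial σ R) ∣ p ↔ θ p = 0 := by
    intro p
    constructor
    · rintro ⟨q, rfl⟩
      simp [hθdef]
    · intro h
      have h2 := sub_aeval_mem (fun t => if t = s then 0 else X t) {X s}
        (fun t => by by_cases ht : t = s <;> simp [ht]) p
      rw [Ideal.mem_span_singleton] at h2
      rw [← hθdef] at h2
      have : p - θ p = p := by rw [h, sub_zero]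
      rwa [this] at h2
  refine ⟨X_ne_zero s, ?_, fun a b hab => ?_⟩
  · intro hu
    have := hu.map (eval (0 : σ → R))
    simp at this
  · rw [hθ] at hab ⊢
    rw [hθ b]
    rw [map_mul] at hab
    exact mul_eq_zero.mp hab


private lemma quadric_core {k : Type*} [Field k] {n : ℕ} (i : Fin n)
    (p : MvPolynomial (Fin (n + 1) ⊕ Fin (n + 1)) k)
    (hb : p * X (Sum.inl i.castSucc) ∈ Ideal.span
      (insert ((∑ j : Fin (n + 1), X (Sum.inl j) * X (Sum.inr j) : MvPolynomial (Fin (n + 1) ⊕ Fin (n + 1)) k) - 1)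
        {q | ∃ j : Fin n, j < i ∧ q = X (Sum.inl j.castSucc)})) :
    p ∈ Ideal.span
      (insert ((∑ j : Fin (n + 1), X (Sum.inl j) * X (Sum.inr j) : MvPolynomial (Fin (n + 1) ⊕ Fin (n + 1)) k) - 1)
        {q | ∃ j : Fin n, j < i ∧ q = X (Sum.inl j.castSucc)}) := by
  classical
  set f : MvPolynomial (Fin (n + 1) ⊕ Fin (n + 1)) k := (∑ j : Fin (n + 1), X (Sum.inl j) * X (Sum.inr j) : MvPolynomial (Fin (n + 1) ⊕ Fin (n + 1)) k) - 1 with hf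
  set T : Set (MvPolynomial (Fin (n + 1) ⊕ Fin (n + 1)) k) := {q | ∃ j : Fin n, j < i ∧ q = X (Sum.inl j.castSucc)} with hT
  set g : Fin (n + 1) ⊕ Fin (n + 1) → MvPolynomial (Fin (n + 1) ⊕ Fin (n + 1)) k :=
    Sum.elim (fun j => if (j : ℕ) < (i : ℕ) then 0 else X (Sum.inl j))
      (fun j => X (Sum.inr j)) with hg
  set ψ : MvPolynomial (Fin (n + 1) ⊕ Fin (n + 1)) k →ₐ[k] MvPolynomial (Fin (n + 1) ⊕ Fin (n + 1)) k := aeval g with hψ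
  have hgspec : ∀ t, (g t = 0 ∧ X t ∈ T) ∨ g t = X t := by
    rintro (j | j)
    · by_cases hj : (j : ℕ) < (i : ℕ)
      · refine Or.inl ⟨by simp [hg, hj], ?_⟩
        refine ⟨⟨(j : ℕ), lt_trans hj i.isLt⟩, hj, ?_⟩
        have hcs : (Fin.castSucc (⟨(j : ℕ), lt_trans hj i.isLt⟩ : Fin n)) = j := by
          ext; simp
        rw [hcs]
      · exact Or.inr (by simp [hg, hj])
    · exact Or.inr (by simp [hg])
  have hsub : ∀ q : MvPolynomial (Fin (n + 1) ⊕ Fin (n + 1)) k, q - ψ q ∈ Ideal.span T := fun q => sub_aeval_mem g T hgspec q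
  have hψT : ∀ q ∈ T, ψ q = 0 := by
    rintro q ⟨j, hj, rfl⟩
    have hjv : ((j.castSucc : Fin (n + 1)) : ℕ) < (i : ℕ) := hj
    simp [hψ, hg, hjv, hj]
  have hψX : ψ (X (Sum.inl i.castSucc)) = X (Sum.inl i.castSucc) := by
    simp [hψ, hg]
  have hmap : ψ (p * X (Sum.inl i.castSucc)) ∈ Ideal.span {ψ f} := by
    have h1 : ψ (p * X (Sum.inl i.castSucc)) ∈ Ideal.map ψ (Ideal.span (insert f T)) :=
      Ideal.mem_map_of_mem _ hb
    rw [Ideal.map_span] at h1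
    refine Ideal.span_le.mpr ?_ h1
    rintro _ ⟨q, hq, rfl⟩
    rcases hq with rfl | hq
    · exact Ideal.subset_span rfl
    · rw [hψT q hq]; exact Ideal.zero_mem _
  rw [Ideal.mem_span_singleton, map_mul, hψX] at hmap
  have hne : ¬ (X (Sum.inl i.castSucc) : MvPolynomial (Fin (n + 1) ⊕ Fin (n + 1)) k) ∣ ψ f := by
    rintro ⟨h, hh⟩
    have hc := congrArg (eval (0 : Fin (n + 1) ⊕ Fin (n + 1) → k)) hh
    rw [hψ, hf] at hc
    simp only [map_sub, map_sum, map_mul, map_one, hg, Sum.elim_inl, Sum.elim_inr,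
      eval_X, aeval_X] at hc
    simp [apply_ite (constantCoeff : MvPolynomial (Fin (n + 1) ⊕ Fin (n + 1)) k →+* k),
      map_mul, apply_ite (eval (0 : Fin (n + 1) ⊕ Fin (n + 1) → k))] at hc
  have hX : Prime (X (Sum.inl i.castSucc) : MvPolynomial (Fin (n + 1) ⊕ Fin (n + 1)) k) := prime_X' _
  obtain ⟨c, hc⟩ := hmap
  have hdvd : (X (Sum.inl i.castSucc) : MvPolynomial (Fin (n + 1) ⊕ Fin (n + 1)) k) ∣ ψ f * c := ⟨ψ p, by rw [← hc]; ring⟩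
  rcases hX.2.2 _ _ hdvd with h | h
  · exact absurd h hne
  obtain ⟨c', rfl⟩ := h
  have hcancel : ψ p = ψ f * c' := by
    have hx0 : (X (Sum.inl i.castSucc) : MvPolynomial (Fin (n + 1) ⊕ Fin (n + 1)) k) ≠ 0 := X_ne_zero _
    apply mul_right_cancel₀ hx0
    rw [hc]; ring
  have hψf : ψ f ∈ Ideal.span (insert f T) := by
    have h1 : f ∈ Ideal.span (insert f T) := Ideal.subset_span (Set.mem_insert _ _)
    have h3 : f - ψ f ∈ Ideal.span (insert f T) :=
      Ideal.span_mono (Set.subset_insert _ _) (hsub f)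
    have heq : ψ f = f - (f - ψ f) := by ring
    rw [heq]
    exact Ideal.sub_mem _ h1 h3
  have h4 : ψ p ∈ Ideal.span (insert f T) := by
    rw [hcancel]; exact Ideal.mul_mem_right _ _ hψf
  have h5 : p - ψ p ∈ Ideal.span (insert f T) :=
    Ideal.span_mono (Set.subset_insert _ _) (hsub p)
  have heq : p = (p - ψ p) + ψ p := by ring
  rw [heq]
  exact Ideal.add_mem _ h5 h4

/-- In the coordinate ring `B` of the odd quadric `Q_{2n+1}`, the sequence `(x₁, …, xₙ)` is
regular: for each `i`, `xᵢ` is a non-zerodivisor on `B/⟨x₁, …, x_{i-1}⟩`.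
(Indices are 0-based below.) -/
theorem odd_quadric_x_regular_sequence (k : Type*) [Field k] (n : ℕ) (hn : 1 ≤ n) :
    let R := MvPolynomial (Fin (n + 1) ⊕ Fin (n + 1)) k
    let B := R ⧸ Ideal.span {(∑ i : Fin (n + 1), X (Sum.inl i) * X (Sum.inr i) : R) - 1}
    let x : Fin (n + 1) → B := fun i => Ideal.Quotient.mk _ (X (Sum.inl i))
    ∀ i : Fin n, ∀ b : B,
      b * x i.castSucc ∈ Ideal.span {c | ∃ j : Fin n, j < i ∧ c = x j.castSucc} →
        b ∈ Ideal.span {c | ∃ j : Fin n, j < i ∧ c = x j.castSucc} := by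
  classical
  intro R B x i b hb
  set f : R := (∑ i : Fin (n + 1), X (Sum.inl i) * X (Sum.inr i) : R) - 1 with hf
  set T : Set R := {q | ∃ j : Fin n, j < i ∧ q = X (Sum.inl j.castSucc)} with hT
  have hS : {c : B | ∃ j : Fin n, j < i ∧ c = x j.castSucc}
      = (Ideal.Quotient.mk (Ideal.span {f})) '' T := by
    ext c
    constructor
    · rintro ⟨j, hj, rfl⟩
      exact ⟨X (Sum.inl j.castSucc), ⟨j, hj, rfl⟩, rfl⟩
    · rintro ⟨q, ⟨j, hj, rfl⟩, rfl⟩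
      exact ⟨j, hj, rfl⟩
  obtain ⟨p, rfl⟩ := Ideal.Quotient.mk_surjective b
  rw [hS, ← Ideal.map_span] at hb ⊢
  have hxm : x i.castSucc = Ideal.Quotient.mk (Ideal.span {f}) (X (Sum.inl i.castSucc)) := rfl
  rw [hxm, ← map_mul, Ideal.mem_quotient_iff_mem_sup] at hb
  rw [Ideal.mem_quotient_iff_mem_sup]
  rw [← Ideal.span_union, Set.union_comm, ← Set.insert_eq] at hb ⊢
  exact quadric_core i p hb
end
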